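/- arXiv:2005.02871 — 2 statements merged into one kernel-verified Lean document; each statement's English description precedes it below -/
import Mathlib

section
/- Let N ≥ 1, let A be a Hermitian N×N complex matrix, set ρ = exp(A), let θ ∈ ℝ, and let X, ξ be arbitrary N×N complex matrices. Then the trace Tr(ξ† · [X, [ρ]_θ([X†, ξ])]) is a nonnegative real number (its imaginary part is zero and its real part is ≥ 0), and it equals zero if and only if [X†, ξ] = 0. -/
open scoped Matrix.Norms.L2Operator

open Matrix

/-- The tilted operator `[ρ]_θ(X)` for `ρ = exp(A)`:
`[ρ]_θ(X) = e^(−θ/2) ∫₀¹ e^(sθ) exp(sA) X exp((1−s)A) ds`. -/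
noncomputable def tilted {N : ℕ} (A : Matrix (Fin N) (Fin N) ℂ) (θ : ℝ)
    (X : Matrix (Fin N) (Fin N) ℂ) : Matrix (Fin N) (Fin N) ℂ :=
  Real.exp (-θ/2) • ∫ s in (0:ℝ)..1, Real.exp (s * θ) •
    (NormedSpace.exp (s • A) * X * NormedSpace.exp ((1 - s) • A))

/-!
Write `Y = [X†, ξ]`. Cyclicity of the trace turns the quantity into `Tr(Y† [ρ]_θ(Y))`.
For Hermitian `A` we have `exp(sA) = exp(sA/2)²` with `exp(sA/2)` Hermitian, so the integrand
`Tr(Y† exp(sA) Y exp((1-s)A))` equals `Tr(M† M)` for `M = exp(sA/2) Y exp((1-s)A/2)`: it is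
nonnegative, and vanishes only when `Y = 0` because matrix exponentials are invertible.
Integrating against the positive weight `e^{(s-1/2)θ}` preserves both properties.
-/

open scoped ComplexOrder

namespace Matrix

theorem trace_conjTranspose_mul_commutator {n R : Type*} [Fintype n] [CommRing R] [StarRing R]
    (X ξ T : Matrix n n R) :
    trace (ξᴴ * (X * T - T * X)) = trace ((Xᴴ * ξ - ξ * Xᴴ)ᴴ * T) := by
  rw [conjTranspose_sub, conjTranspose_mul, conjTranspose_mul, conjTranspose_conjTranspose,
    mul_sub, sub_mul, trace_sub, trace_sub, ← mul_assoc, ← mul_assoc, trace_mul_cycle ξᴴ T X]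

theorem IsHermitian.trace_conjTranspose_mul_mul_self_mul_mul_self {n R : Type*} [Fintype n]
    [CommRing R] [StarRing R] {P Q : Matrix n n R} (hP : P.IsHermitian) (hQ : Q.IsHermitian)
    (Y : Matrix n n R) :
    trace (Yᴴ * (P * P * Y * (Q * Q))) = trace ((P * Y * Q)ᴴ * (P * Y * Q)) := by
  rw [conjTranspose_mul, conjTranspose_mul, hP.eq, hQ.eq]
  simp only [mul_assoc]
  rw [trace_mul_comm Q]
  simp only [mul_assoc]

variable {n 𝕜 : Type*} [Fintype n] [DecidableEq n] [RCLike 𝕜]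

theorem exp_smul_eq_exp_half_smul_mul_self (A : Matrix n n 𝕜) (t : ℝ) :
    NormedSpace.exp (t • A) =
      NormedSpace.exp ((t / 2) • A) * NormedSpace.exp ((t / 2) • A) := by
  rw [← exp_add_of_commute _ _ (Commute.refl _), ← add_smul, add_halves]

namespace IsHermitian

variable {A : Matrix n n 𝕜} (hA : A.IsHermitian)
include hA

theorem trace_conjTranspose_mul_exp_mul_exp (Y : Matrix n n 𝕜) (s t : ℝ) :
    trace (Yᴴ * (NormedSpace.exp (s • A) * Y * NormedSpace.exp (t • A))) =
      trace ((NormedSpace.exp ((s / 2) • A) * Y * NormedSpace.exp ((t / 2) • A))ᴴ *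
        (NormedSpace.exp ((s / 2) • A) * Y * NormedSpace.exp ((t / 2) • A))) := by
  rw [exp_smul_eq_exp_half_smul_mul_self A s, exp_smul_eq_exp_half_smul_mul_self A t]
  exact trace_conjTranspose_mul_mul_self_mul_mul_self (hA.smul (.all _)).exp
    (hA.smul (.all _)).exp Y

theorem trace_conjTranspose_mul_exp_mul_exp_nonneg (Y : Matrix n n 𝕜) (s t : ℝ) :
    0 ≤ trace (Yᴴ * (NormedSpace.exp (s • A) * Y * NormedSpace.exp (t • A))) := by
  rw [hA.trace_conjTranspose_mul_exp_mul_exp]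
  exact (posSemidef_conjTranspose_mul_self _).trace_nonneg

theorem trace_conjTranspose_mul_exp_mul_exp_eq_zero_iff {Y : Matrix n n 𝕜} (s t : ℝ) :
    trace (Yᴴ * (NormedSpace.exp (s • A) * Y * NormedSpace.exp (t • A))) = 0 ↔ Y = 0 := by
  rw [hA.trace_conjTranspose_mul_exp_mul_exp, trace_conjTranspose_mul_self_eq_zero_iff,
    (isUnit_exp _).mul_left_eq_zero, (isUnit_exp _).mul_right_eq_zero]

end IsHermitian

@[fun_prop]
theorem continuous_exp : Continuous (NormedSpace.exp : Matrix n n 𝕜 → Matrix n n 𝕜) :=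
  continuous_iff_continuousAt.2 fun M => (NormedSpace.exp_analytic (𝕂 := 𝕜) M).continuousAt

end Matrix

section Tilted

variable {N : ℕ}

theorem trace_mul_tilted (B A : Matrix (Fin N) (Fin N) ℂ) (θ : ℝ)
    (Y : Matrix (Fin N) (Fin N) ℂ) :
    trace (B * tilted A θ Y) = Real.exp (-θ / 2) • ∫ s in (0:ℝ)..1, Real.exp (s * θ) •
      trace (B * (NormedSpace.exp (s • A) * Y * NormedSpace.exp ((1 - s) • A))) := by
  let L : Matrix (Fin N) (Fin N) ℂ →L[ℂ] ℂ :=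
    LinearMap.toContinuousLinearMap ((traceLinearMap _ ℂ ℂ).comp (LinearMap.mulLeft ℂ B))
  have hint : IntervalIntegrable (fun s : ℝ => Real.exp (s * θ) •
      (NormedSpace.exp (s • A) * Y * NormedSpace.exp ((1 - s) • A))) MeasureTheory.volume 0 1 :=
    Continuous.intervalIntegrable (by fun_prop) 0 1
  rw [tilted, Matrix.mul_smul, trace_smul]
  congr 1
  exact (L.intervalIntegral_comp_comm hint).symm.trans (by simp [L])

variable {A : Matrix (Fin N) (Fin N) ℂ}

theorem Matrix.IsHermitian.trace_conjTranspose_mul_tilted (hA : A.IsHermitian) (θ : ℝ)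
    (Y : Matrix (Fin N) (Fin N) ℂ) :
    trace (Yᴴ * tilted A θ Y) =
      ((Real.exp (-θ / 2) * ∫ s in (0:ℝ)..1, Real.exp (s * θ) *
        (trace (Yᴴ * (NormedSpace.exp (s • A) * Y * NormedSpace.exp ((1 - s) • A)))).re :
          ℝ) : ℂ) := by
  rw [trace_mul_tilted, Complex.ofReal_mul, ← intervalIntegral.integral_ofReal, Complex.real_smul]
  congr 1
  refine intervalIntegral.integral_congr fun s _ => ?_
  obtain ⟨-, him⟩ :=
    Complex.nonneg_iff.1 (hA.trace_conjTranspose_mul_exp_mul_exp_nonneg Y s (1 - s))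
  rw [Complex.real_smul, Complex.ofReal_mul]
  congr 1
  exact Complex.ext (by simp) (by simp [← him])

theorem Matrix.IsHermitian.trace_conjTranspose_mul_tilted_nonneg (hA : A.IsHermitian) (θ : ℝ)
    (Y : Matrix (Fin N) (Fin N) ℂ) : 0 ≤ trace (Yᴴ * tilted A θ Y) := by
  rw [hA.trace_conjTranspose_mul_tilted, Complex.zero_le_real]
  refine mul_nonneg (Real.exp_pos _).le
    (intervalIntegral.integral_nonneg zero_le_one fun s _ => ?_)
  exact mul_nonneg (Real.exp_pos _).le
    (Complex.nonneg_iff.1 (hA.trace_conjTranspose_mul_exp_mul_exp_nonneg Y s (1 - s))).1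

theorem Matrix.IsHermitian.trace_conjTranspose_mul_tilted_eq_zero_iff (hA : A.IsHermitian)
    (θ : ℝ) {Y : Matrix (Fin N) (Fin N) ℂ} : trace (Yᴴ * tilted A θ Y) = 0 ↔ Y = 0 := by
  refine ⟨fun h => by_contra fun hY => ?_, fun hY => by simp [hY]⟩
  have hpos : ∀ s : ℝ, 0 < (trace (Yᴴ * (NormedSpace.exp (s • A) * Y *
      NormedSpace.exp ((1 - s) • A)))).re := fun s =>
    (Complex.pos_iff.1 ((hA.trace_conjTranspose_mul_exp_mul_exp_nonneg Y s (1 - s)).lt_of_ne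
      (Ne.symm ((hA.trace_conjTranspose_mul_exp_mul_exp_eq_zero_iff s (1 - s)).not.2 hY)))).1
  rw [hA.trace_conjTranspose_mul_tilted, Complex.ofReal_eq_zero] at h
  exact (mul_pos (Real.exp_pos _) (intervalIntegral.intervalIntegral_pos_of_pos_on
    (Continuous.intervalIntegrable (by fun_prop) 0 1)
    (fun s _ => mul_pos (Real.exp_pos _) (hpos s)) zero_lt_one)).ne' h

end Tilted

theorem trace_commutator_tilted_self_nonneg_general (N : ℕ)
    (A : Matrix (Fin N) (Fin N) ℂ) (hA : A.IsHermitian) (θ : ℝ)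
    (X ξ : Matrix (Fin N) (Fin N) ℂ) :
    (Matrix.trace (ξᴴ *
        (X * tilted A θ (Xᴴ * ξ - ξ * Xᴴ) - tilted A θ (Xᴴ * ξ - ξ * Xᴴ) * X))).im = 0 ∧
    0 ≤ (Matrix.trace (ξᴴ *
        (X * tilted A θ (Xᴴ * ξ - ξ * Xᴴ) - tilted A θ (Xᴴ * ξ - ξ * Xᴴ) * X))).re ∧
    (Matrix.trace (ξᴴ *
        (X * tilted A θ (Xᴴ * ξ - ξ * Xᴴ) - tilted A θ (Xᴴ * ξ - ξ * Xᴴ) * X)) = 0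
      ↔ Xᴴ * ξ - ξ * Xᴴ = 0) := by
  rw [trace_conjTranspose_mul_commutator]
  obtain ⟨hre, him⟩ :=
    Complex.nonneg_iff.1 (hA.trace_conjTranspose_mul_tilted_nonneg θ (Xᴴ * ξ - ξ * Xᴴ))
  exact ⟨him.symm, hre, hA.trace_conjTranspose_mul_tilted_eq_zero_iff θ⟩

/-- `Tr(ξ† [X, [ρ]_θ([X†, ξ])])` is real and nonnegative, and vanishes iff `[X†, ξ] = 0`,
where `ρ = exp(A)` with `A` Hermitian. -/
theorem trace_commutator_tilted_self_nonneg (N : ℕ) (hN : 1 ≤ N)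
    (A : Matrix (Fin N) (Fin N) ℂ) (hA : A.IsHermitian) (θ : ℝ)
    (X ξ : Matrix (Fin N) (Fin N) ℂ) :
    (Matrix.trace (ξᴴ *
        (X * tilted A θ (Xᴴ * ξ - ξ * Xᴴ) - tilted A θ (Xᴴ * ξ - ξ * Xᴴ) * X))).im = 0 ∧
    0 ≤ (Matrix.trace (ξᴴ *
        (X * tilted A θ (Xᴴ * ξ - ξ * Xᴴ) - tilted A θ (Xᴴ * ξ - ξ * Xᴴ) * X))).re ∧
    (Matrix.trace (ξᴴ *
        (X * tilted A θ (Xᴴ * ξ - ξ * Xᴴ) - tilted A θ (Xᴴ * ξ - ξ * Xᴴ) * X)) = 0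
      ↔ Xᴴ * ξ - ξ * Xᴴ = 0) :=
  trace_commutator_tilted_self_nonneg_general N A hA θ X ξ
end

section
/- Let N ≥ 1, let R be an N×N real matrix with R_{mn} ≥ 0 for all m ≠ n, let p^eq : Fin N → ℝ with p^eq_n > 0 satisfy detailed balance R_{nm}·p^eq_m = R_{mn}·p^eq_n, let p : Fin N → ℝ with p_n > 0, and assume the undirected graph with an edge between n and m whenever R_{nm} > 0 is connected. Define (K_p v)_n := Σ_{m≠n} R_{nm} · p^eq_m · Φ(p_n/p^eq_n, p_m/p^eq_m) · (v_n − v_m). Then for every u ∈ ℝ^N with Σ_n u_n = 0, there exists a unique v ∈ ℝ^N such that K_p v = u and Σ_n v_n = 0. -/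
/-!
`K_p` is the Laplacian of the weighted graph with weights
`W n m = R n m * peq m * Φ (p n / peq n) (p m / peq m)`. Detailed balance and the symmetry of the
logarithmic mean make `W` symmetric, and `W` is positive on every edge of the graph of `R`.
For a symmetric weight the Laplacian maps into the zero-sum hyperplane and
`2 ⟨v, L v⟩ = Σ_{n,m} W n m (v n - v m)²`, so on a connected graph its kernel consists of the
constant vectors. Hence `K_p` is injective, and by finite dimensionality bijective, on the
zero-sum hyperplane.
-/

/-- The logarithmic mean of two positive real numbers. -/
noncomputable def logMean (x y : ℝ) : ℝ :=
  if x = y then x else (x - y) / (Real.log x - Real.log y)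

/-- The Onsager-type matrix `K_p` acting on a vector `v`:
`(K_p v)_n = Σ_{m≠n} R_{nm} p^eq_m Φ(p_n/p^eq_n, p_m/p^eq_m) (v_n − v_m)`. -/
noncomputable def Kop {N : ℕ} (R : Matrix (Fin N) (Fin N) ℝ) (peq p v : Fin N → ℝ) :
    Fin N → ℝ :=
  fun n => ∑ m ∈ Finset.univ.filter (· ≠ n),
    R n m * peq m * logMean (p n / peq n) (p m / peq m) * (v n - v m)

open Finset

lemma logMean_comm (x y : ℝ) : logMean x y = logMean y x := by
  unfold logMean
  rcases eq_or_ne x y with h | h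
  · simp [h]
  · rw [if_neg h, if_neg h.symm, ← neg_sub y x, ← neg_sub (Real.log y), neg_div_neg_eq]

lemma logMean_pos {x y : ℝ} (hx : 0 < x) (hy : 0 < y) : 0 < logMean x y := by
  unfold logMean
  split_ifs with h
  · exact hx
  · rcases lt_or_gt_of_ne h with h' | h'
    · exact div_pos_of_neg_of_neg (by linarith) (sub_neg.mpr (Real.log_lt_log hx h'))
    · exact div_pos (by linarith) (sub_pos.mpr (Real.log_lt_log hy h'))

theorem LinearMap.existsUnique_apply_eq_of_comp_eq_zero {K V W : Type*} [Field K]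
    [AddCommGroup V] [Module K V] [FiniteDimensional K V] [AddCommGroup W] [Module K W]
    (f : V →ₗ[K] V) (S : V →ₗ[K] W) (hSf : S ∘ₗ f = 0)
    (hker : ∀ v, f v = 0 → S v = 0 → v = 0) {u : V} (hu : S u = 0) :
    ∃! v, f v = u ∧ S v = 0 := by
  have hmaps : ∀ v ∈ ker S, f v ∈ ker S := fun v _ => LinearMap.congr_fun hSf v
  have hinj : Function.Injective (f.restrict hmaps) := by
    rw [← LinearMap.ker_eq_bot, LinearMap.ker_eq_bot']
    rintro ⟨v, hv⟩ hfv
    exact Subtype.ext (hker v (congrArg Subtype.val hfv) hv)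
  obtain ⟨⟨v, hv⟩, hfv⟩ := LinearMap.injective_iff_surjective.mp hinj ⟨u, hu⟩
  refine ⟨v, ⟨congrArg Subtype.val hfv, hv⟩, fun w ⟨hfw, hw⟩ => ?_⟩
  have hfwv : f.restrict hmaps ⟨w, hw⟩ = f.restrict hmaps ⟨v, hv⟩ :=
    Subtype.ext (hfw.trans (congrArg Subtype.val hfv).symm)
  exact congrArg Subtype.val (hinj hfwv)

lemma SimpleGraph.Connected.eq_of_forall_adj {V α : Type*} {G : SimpleGraph V}
    (hG : G.Connected) {f : V → α} (hf : ∀ n m, G.Adj n m → f n = f m) (n m : V) :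
    f n = f m := by
  obtain ⟨w⟩ := hG.preconnected n m
  induction w with
  | nil => rfl
  | cons h _ ih => exact (hf _ _ h).trans ih

section WeightedLaplacian

variable {ι : Type*} [Fintype ι] {W : ι → ι → ℝ}

noncomputable def weightedLaplacian (W : ι → ι → ℝ) : (ι → ℝ) →ₗ[ℝ] ι → ℝ where
  toFun v n := ∑ m, W n m * (v n - v m)
  map_add' v w := by
    ext n
    simp only [Pi.add_apply, ← sum_add_distrib]
    exact sum_congr rfl fun m _ => by ring
  map_smul' c v := by
    ext n
    simp only [Pi.smul_apply, smul_eq_mul, RingHom.id_apply, mul_sum]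
    exact sum_congr rfl fun m _ => by ring

lemma weightedLaplacian_apply (v : ι → ℝ) (n : ι) :
    weightedLaplacian W v n = ∑ m, W n m * (v n - v m) := rfl

lemma two_mul_sum_mul_weightedLaplacian (hW : ∀ n m, W n m = W m n) (g v : ι → ℝ) :
    2 * ∑ n, g n * weightedLaplacian W v n
      = ∑ n, ∑ m, W n m * (g n - g m) * (v n - v m) := by
  have hswap : ∑ n, ∑ m, W n m * (v n - v m) * g m
      = -∑ n, ∑ m, W n m * (v n - v m) * g n := by
    rw [sum_comm]
    simp only [← sum_neg_distrib]
    exact sum_congr rfl fun n _ => sum_congr rfl fun m _ => by rw [hW]; ring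
  have hL : ∑ n, g n * weightedLaplacian W v n = ∑ n, ∑ m, W n m * (v n - v m) * g n := by
    simp only [weightedLaplacian_apply, mul_sum]
    exact sum_congr rfl fun n _ => sum_congr rfl fun m _ => by ring
  calc 2 * ∑ n, g n * weightedLaplacian W v n
      = ∑ n, ∑ m, W n m * (v n - v m) * g n - ∑ n, ∑ m, W n m * (v n - v m) * g m := by
        rw [hswap, hL]; ring
    _ = ∑ n, ∑ m, W n m * (g n - g m) * (v n - v m) := by
        simp only [← sum_sub_distrib]
        exact sum_congr rfl fun n _ => sum_congr rfl fun m _ => by ring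

lemma sum_weightedLaplacian (hW : ∀ n m, W n m = W m n) (v : ι → ℝ) :
    ∑ n, weightedLaplacian W v n = 0 := by
  simpa using two_mul_sum_mul_weightedLaplacian hW 1 v

lemma eq_of_weightedLaplacian_eq_zero (hW : ∀ n m, W n m = W m n)
    (hW₀ : ∀ n m, n ≠ m → 0 ≤ W n m) {v : ι → ℝ} (hv : weightedLaplacian W v = 0) {n m : ι}
    (hnm : 0 < W n m) : v n = v m := by
  have hterm : ∀ n m, 0 ≤ W n m * (v n - v m) * (v n - v m) := fun n m => by
    rcases eq_or_ne n m with rfl | h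
    · simp
    · rw [mul_assoc]
      exact mul_nonneg (hW₀ n m h) (mul_self_nonneg _)
  have hsum : ∑ n, ∑ m, W n m * (v n - v m) * (v n - v m) = 0 := by
    rw [← two_mul_sum_mul_weightedLaplacian hW, hv]
    simp
  rw [sum_eq_zero_iff_of_nonneg fun n _ => sum_nonneg fun m _ => hterm n m] at hsum
  have h := (sum_eq_zero_iff_of_nonneg fun m _ => hterm n m).mp (hsum n (mem_univ n)) m
    (mem_univ m)
  rw [mul_assoc, mul_eq_zero, mul_self_eq_zero, sub_eq_zero] at h
  exact h.resolve_left hnm.ne'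

lemma eq_zero_of_weightedLaplacian_eq_zero (hW : ∀ n m, W n m = W m n)
    (hW₀ : ∀ n m, n ≠ m → 0 ≤ W n m)
    (hconn : (SimpleGraph.fromRel fun n m => 0 < W n m).Connected) {v : ι → ℝ}
    (hv : weightedLaplacian W v = 0) (hsum : ∑ n, v n = 0) : v = 0 := by
  have hconst : ∀ n m, v n = v m := hconn.eq_of_forall_adj fun n m hadj => by
    obtain ⟨-, h | h⟩ := (SimpleGraph.fromRel_adj _ n m).mp hadj
    · exact eq_of_weightedLaplacian_eq_zero hW hW₀ hv h
    · exact (eq_of_weightedLaplacian_eq_zero hW hW₀ hv h).symm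
  ext n
  have hcard : (Fintype.card ι : ℝ) ≠ 0 := by exact_mod_cast (Fintype.card_pos_iff.mpr ⟨n⟩).ne'
  have : (Fintype.card ι : ℝ) * v n = 0 := by simpa [hconst _ n] using hsum
  exact (mul_eq_zero.mp this).resolve_left hcard

end WeightedLaplacian

lemma Kop_eq_weightedLaplacian {N : ℕ} (R : Matrix (Fin N) (Fin N) ℝ) (peq p v : Fin N → ℝ) :
    Kop R peq p v =
      weightedLaplacian (fun n m => R n m * peq m * logMean (p n / peq n) (p m / peq m)) v := by
  ext n
  refine sum_filter_of_ne fun m _ h => ?_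
  rintro rfl
  simp at h

theorem existsUnique_Kop_eq_general (N : ℕ)
    (R : Matrix (Fin N) (Fin N) ℝ) (hR : ∀ m n : Fin N, m ≠ n → 0 ≤ R m n)
    (peq : Fin N → ℝ) (hpeq : ∀ n, 0 < peq n)
    (hdb : ∀ n m : Fin N, R n m * peq m = R m n * peq n)
    (p : Fin N → ℝ) (hp : ∀ n, 0 < p n)
    (hconn : (SimpleGraph.fromRel (fun n m : Fin N => 0 < R n m)).Connected)
    (u : Fin N → ℝ) (hu : ∑ n, u n = 0) :
    ∃! v : Fin N → ℝ, Kop R peq p v = u ∧ ∑ n, v n = 0 := by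
  set W : Fin N → Fin N → ℝ := fun n m => R n m * peq m * logMean (p n / peq n) (p m / peq m)
  have hΦ : ∀ n m, 0 < logMean (p n / peq n) (p m / peq m) := fun n m =>
    logMean_pos (div_pos (hp n) (hpeq n)) (div_pos (hp m) (hpeq m))
  have hW : ∀ n m, W n m = W m n := fun n m => by simp only [W, hdb n m, logMean_comm]
  have hW₀ : ∀ n m, n ≠ m → 0 ≤ W n m := fun n m h =>
    mul_nonneg (mul_nonneg (hR n m h) (hpeq m).le) (hΦ n m).le
  have hWpos : ∀ n m, 0 < R n m → 0 < W n m := fun n m h =>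
    mul_pos (mul_pos h (hpeq m)) (hΦ n m)
  have hconnW : (SimpleGraph.fromRel fun n m => 0 < W n m).Connected :=
    hconn.mono fun n m hadj => by
      rw [SimpleGraph.fromRel_adj] at hadj ⊢
      exact hadj.imp_right (Or.imp (hWpos n m) (hWpos m n))
  let S : (Fin N → ℝ) →ₗ[ℝ] ℝ := LinearMap.lsum ℝ (fun _ => ℝ) ℕ fun _ => LinearMap.id
  have hS : ∀ v, S v = ∑ n, v n := fun v => by simp [S]
  simp only [Kop_eq_weightedLaplacian, ← hS] at hu ⊢
  refine LinearMap.existsUnique_apply_eq_of_comp_eq_zero _ S ?_ ?_ hu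
  · exact LinearMap.ext fun v => (hS _).trans (sum_weightedLaplacian hW v)
  · intro v hv hsum
    exact eq_zero_of_weightedLaplacian_eq_zero hW hW₀ hconnW hv ((hS v).symm.trans hsum)

/-- For an irreducible rate matrix satisfying detailed balance, every `u` with `Σ u_n = 0` has
a unique preimage `v` under `K_p` with `Σ v_n = 0`. -/
theorem existsUnique_Kop_eq (N : ℕ) (hN : 1 ≤ N)
    (R : Matrix (Fin N) (Fin N) ℝ) (hR : ∀ m n : Fin N, m ≠ n → 0 ≤ R m n)
    (peq : Fin N → ℝ) (hpeq : ∀ n, 0 < peq n)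
    (hdb : ∀ n m : Fin N, R n m * peq m = R m n * peq n)
    (p : Fin N → ℝ) (hp : ∀ n, 0 < p n)
    (hconn : (SimpleGraph.fromRel (fun n m : Fin N => 0 < R n m)).Connected)
    (u : Fin N → ℝ) (hu : ∑ n, u n = 0) :
    ∃! v : Fin N → ℝ, Kop R peq p v = u ∧ ∑ n, v n = 0 :=
  existsUnique_Kop_eq_general N R hR peq hpeq hdb p hp hconn u hu
end
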